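/- arXiv:2303.13920 — 5 statements merged into one kernel-verified Lean document; each statement's English description precedes it below -/
import Mathlib

section
/- Let K ⊂ ℤ² be a two-dimensional convex symmetric neighbourhood containing 0 and u a rational unit vector with |K ∩ l_u| ≥ 3 odd by symmetry. Suppose x ∈ K with ⟨x,u⟩ ≥ 2ρ_u, and let y = ((|K∩l_u|−1)/2)·u^⊥ be the extreme point of K on l_u, where u^⊥ is the primitive lattice vector generating l_u. Then the triangle with vertices x, y, −y contains at least (|K∩l_u|−1)/2 lattice points on the line l_u(1). -/
open Set

/-- The embedding of the lattice `ℤ²` into `ℝ²`. -/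
def coev (x : ℤ × ℤ) : ℝ × ℝ := ((x.1 : ℝ), (x.2 : ℝ))

/-- The standard inner product on `ℝ²`. -/
def dotp (u v : ℝ × ℝ) : ℝ := u.1 * v.1 + u.2 * v.2

/-!
Put `M = (k - 1) / 2`, so that `y = M • w`, and `t = ρ / ⟨x, u⟩ ≤ 1 / 2`. The triangle meets the
line `⟨·, u⟩ = ρ` in the segment `{t • x + s • y : |s| ≤ 1 - t}`. The lattice points of that line
are `z₀ + j • w` (`j ∈ ℤ`) for any one of them `z₀`, and the segment is `M • w` times an interval
of length `2 (1 - t) ≥ 1`, so it contains at least `M` of them.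
-/

@[simp] theorem dotp_add_right (u v v' : ℝ × ℝ) : dotp u (v + v') = dotp u v + dotp u v' := by
  simp only [dotp, Prod.fst_add, Prod.snd_add]; ring

@[simp] theorem dotp_sub_right (u v v' : ℝ × ℝ) : dotp u (v - v') = dotp u v - dotp u v' := by
  simp only [dotp, Prod.fst_sub, Prod.snd_sub]; ring

@[simp] theorem dotp_smul_right (u v : ℝ × ℝ) (c : ℝ) : dotp u (c • v) = c * dotp u v := by
  simp only [dotp, Prod.smul_fst, Prod.smul_snd, smul_eq_mul]; ring

@[simp] theorem dotp_zero_left (v : ℝ × ℝ) : dotp 0 v = 0 := by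
  simp [dotp]

@[simp] theorem coev_add (a b : ℤ × ℤ) : coev (a + b) = coev a + coev b := by
  simp [coev]

@[simp] theorem coev_zsmul (m : ℤ) (a : ℤ × ℤ) : coev (m • a) = (m : ℝ) • coev a := by
  simp [coev]

theorem isometry_coev : Isometry coev :=
  Isometry.of_dist_eq fun a b => by simp [coev, Prod.dist_eq, Int.dist_cast_real]

theorem coev_ne_zero {z : ℤ × ℤ} (hz : z ≠ 0) : coev z ≠ 0 := by
  simpa [coev] using isometry_coev.injective.ne hz

theorem finite_setOf_coev_mem {B : Set (ℝ × ℝ)} (hB : Bornology.IsBounded B) :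
    {z | coev z ∈ B}.Finite :=
  (Metric.isCompact_of_isClosed_isBounded (isClosed_discrete _)
    (isometry_coev.antilipschitz.isBounded_preimage hB)).finite_of_discrete

theorem exists_eq_smul_of_dotp_eq_zero {u v p : ℝ × ℝ} (hu : u ≠ 0) (hv : v ≠ 0)
    (huv : dotp u v = 0) (hup : dotp u p = 0) : ∃ c : ℝ, p = c • v := by
  simp only [dotp] at huv hup
  have hcross : (p.1 * v.2 - p.2 * v.1) • u = 0 := by
    refine Prod.ext ?_ ?_ <;> simp only [Prod.smul_fst, Prod.smul_snd, smul_eq_mul, Prod.fst_zero,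
      Prod.snd_zero]
    · linear_combination v.2 * hup - p.2 * huv
    · linear_combination p.1 * huv - v.1 * hup
  replace hcross : p.1 * v.2 = p.2 * v.1 :=
    sub_eq_zero.mp ((smul_eq_zero.mp hcross).resolve_right hu)
  rcases eq_or_ne v.1 0 with hv₁ | hv₁
  · have hv₂ : v.2 ≠ 0 := fun hv₂ => hv (Prod.ext hv₁ hv₂)
    refine ⟨p.2 / v.2, Prod.ext ?_ ?_⟩ <;> simp only [Prod.smul_fst, Prod.smul_snd, smul_eq_mul]
    · rw [hv₁, mul_zero] at hcross
      simp [hv₁, (mul_eq_zero.mp hcross).resolve_right hv₂]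
    · field_simp
  · refine ⟨p.1 / v.1, Prod.ext ?_ ?_⟩ <;> simp only [Prod.smul_fst, Prod.smul_snd, smul_eq_mul]
    · field_simp
    · field_simp
      linarith

theorem ne_zero_of_one_lt_ncard_of_subset_zmultiples {G : Type*} [AddGroup G] {s : Set G} {w : G}
    (hs : s ⊆ AddSubgroup.zmultiples w) (h : 1 < s.ncard) : w ≠ 0 := by
  rintro rfl
  rw [AddSubgroup.zmultiples_zero_eq_bot, AddSubgroup.coe_bot] at hs
  exact h.not_ge ((ncard_le_ncard hs (finite_singleton 0)).trans_eq (ncard_singleton 0))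

theorem le_ncard_Icc_ceil_floor {a b : ℝ} {n : ℕ} (h : a + n ≤ b) :
    n ≤ (Icc ⌈a⌉ ⌊b⌋).ncard := by
  rw [← Finset.coe_Icc, ncard_coe_finset, Int.card_Icc]
  have h₁ : ⌊a⌋ + n ≤ ⌊b⌋ := by rw [← Int.floor_add_natCast]; exact Int.floor_mono h
  have h₂ := Int.ceil_le_floor_add_one a
  omega

theorem smul_add_smul_mem_convexHull {E : Type*} [AddCommGroup E] [Module ℝ E] {x y : E}
    {t s : ℝ} (ht : 0 ≤ t) (hs : |s| ≤ 1 - t) :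
    t • x + s • y ∈ convexHull ℝ {x, y, -y} := by
  obtain ⟨hs₁, hs₂⟩ := abs_le.mp hs
  have hmem := (convex_convexHull ℝ ({x, y, -y} : Set E)).sum_mem (t := Finset.univ)
    (w := ![t, (1 - t + s) / 2, (1 - t - s) / 2]) (z := ![x, y, -y])
    (fun i _ => by
      fin_cases i <;> simp only [Fin.zero_eta, Fin.mk_one, Fin.reduceFinMk, Fin.isValue,
        Matrix.cons_val_zero, Matrix.cons_val_one, Matrix.cons_val] <;> linarith)
    (by simp only [Fin.sum_univ_three, Fin.isValue, Matrix.cons_val_zero, Matrix.cons_val_one,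
      Matrix.cons_val]; ring)
    (fun i _ => subset_convexHull ℝ _ (by fin_cases i <;> simp))
  convert hmem using 1
  simp only [Fin.sum_univ_three, Fin.isValue, Matrix.cons_val_zero, Matrix.cons_val_one,
    Matrix.cons_val]
  module

theorem add_smul_mem_convexHull_of_abs_sub_le {E : Type*} [AddCommGroup E] [Module ℝ E]
    {x v q : E} {t c j M : ℝ} (ht : 0 ≤ t) (hM : 0 < M) (hq : t • x = q + c • v)
    (hj : |j - c| ≤ (1 - t) * M) : q + j • v ∈ convexHull ℝ {x, M • v, -(M • v)} := by
  have hpt : q + j • v = t • x + ((j - c) / M) • (M • v) := by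
    rw [hq, smul_smul, div_mul_cancel₀ _ hM.ne']
    module
  rw [hpt]
  refine smul_add_smul_mem_convexHull ht ?_
  rwa [abs_div, abs_of_pos hM, div_le_iff₀ hM]

theorem stmt_2_general
    (K : Set (ℤ × ℤ))
    (u : ℝ × ℝ)
    (ρ : ℝ) (hρ : IsLeast {r : ℝ | 0 < r ∧ ∃ x : ℤ × ℤ, dotp u (coev x) = r} ρ)
    (w : ℤ × ℤ) (hw : ∀ z : ℤ × ℤ, dotp u (coev z) = 0 ↔ ∃ m : ℤ, z = m • w)
    (k : ℕ) (hk : k = (K ∩ {z : ℤ × ℤ | dotp u (coev z) = 0}).ncard)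
    (hk3 : 3 ≤ k)
    (x : ℤ × ℤ) (hx : 2 * ρ ≤ dotp u (coev x))
    (y : ℤ × ℤ) (hy : y = (((k - 1) / 2 : ℕ) : ℤ) • w) :
    (k - 1) / 2 ≤
      {z : ℤ × ℤ |
        coev z ∈ convexHull ℝ {coev x, coev y, -coev y} ∧
        dotp u (coev z) = ρ}.ncard := by
  obtain ⟨⟨hρ, z₀, hz₀⟩, -⟩ := hρ
  set M := (k - 1) / 2
  have hM : (0 : ℝ) < M := by norm_cast; omega
  have hw₀ : dotp u (coev w) = 0 := (hw w).2 ⟨1, (one_smul ℤ w).symm⟩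
  have hw_ne : w ≠ 0 := ne_zero_of_one_lt_ncard_of_subset_zmultiples
    (s := K ∩ {z | dotp u (coev z) = 0})
    (fun z hz => AddSubgroup.mem_zmultiples_iff.2 (((hw z).1 hz.2).imp fun _ => Eq.symm))
    (by omega)
  have hu : u ≠ 0 := by
    rintro rfl
    simp only [dotp_zero_left] at hz₀
    linarith
  have hxρ : 0 < dotp u (coev x) := by linarith
  set t := ρ / dotp u (coev x)
  have ht₀ : 0 ≤ t := by positivity
  have ht : t ≤ 1 / 2 := by rw [div_le_iff₀ hxρ]; linarith
  obtain ⟨c, hc⟩ := exists_eq_smul_of_dotp_eq_zero (p := t • coev x - coev z₀) hu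
    (coev_ne_zero hw_ne) hw₀ (by simp [t, hz₀, hxρ.ne'])
  have hy' : coev y = (M : ℝ) • coev w := by rw [hy, coev_zsmul, Int.cast_natCast]
  have hmaps : ∀ j ∈ Icc ⌈c - (1 - t) * M⌉ ⌊c + (1 - t) * M⌋, z₀ + j • w ∈
      {z | coev z ∈ convexHull ℝ {coev x, coev y, -coev y} ∧ dotp u (coev z) = ρ} := by
    rintro j ⟨hj₁, hj₂⟩
    refine ⟨?_, by simp only [coev_add, coev_zsmul, dotp_add_right, dotp_smul_right, hz₀, hw₀,
      mul_zero, add_zero]⟩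
    rw [coev_add, coev_zsmul, hy']
    refine add_smul_mem_convexHull_of_abs_sub_le ht₀ hM (eq_add_of_sub_eq' hc) (abs_le.2 ⟨?_, ?_⟩)
    · linarith [Int.ceil_le.1 hj₁]
    · linarith [Int.le_floor.1 hj₂]
  calc M ≤ (Icc ⌈c - (1 - t) * M⌉ ⌊c + (1 - t) * M⌋).ncard :=
        le_ncard_Icc_ceil_floor (by nlinarith)
    _ ≤ _ := ncard_le_ncard_of_injOn _ hmaps ((add_right_injective z₀).comp
        (smul_left_injective ℤ hw_ne)).injOn
        ((finite_setOf_coev_mem (isBounded_convexHull.2 (toFinite _).isBounded)).subset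
          fun _ hz => hz.1)

/-- Let `K` be a two-dimensional convex symmetric neighbourhood containing `0`
and `u` a rational unit vector with `k = |K ∩ l_u| ≥ 3` odd. If `x ∈ K` with `⟨x,u⟩ ≥ 2ρ_u`
and `y = ((k-1)/2)·u^⊥` (with `u^⊥` the primitive lattice generator of `l_u`), then the
triangle with vertices `x`, `y`, `-y` contains at least `(k-1)/2` lattice points on the line
`l_u(1)`. -/
theorem stmt_2 (S : Set (ℝ × ℝ)) (hSbdd : Bornology.IsBounded S) (hSconv : Convex ℝ S)
    (hSsym : ∀ x ∈ S, -x ∈ S)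
    (K : Set (ℤ × ℤ)) (hK : K = {x : ℤ × ℤ | coev x ∈ S})
    (h0K : (0, 0) ∈ K)
    (h2d : ∀ u : ℝ × ℝ, ∃ x ∈ K, ∀ t : ℝ, coev x ≠ t • u)
    (u : ℝ × ℝ) (hunit : u.1 ^ 2 + u.2 ^ 2 = 1)
    (ρ : ℝ) (hρ : IsLeast {r : ℝ | 0 < r ∧ ∃ x : ℤ × ℤ, dotp u (coev x) = r} ρ)
    (w : ℤ × ℤ) (hw : ∀ z : ℤ × ℤ, dotp u (coev z) = 0 ↔ ∃ m : ℤ, z = m • w)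
    (k : ℕ) (hk : k = (K ∩ {z : ℤ × ℤ | dotp u (coev z) = 0}).ncard)
    (hk3 : 3 ≤ k) (hkodd : Odd k)
    (x : ℤ × ℤ) (hxK : x ∈ K) (hx : 2 * ρ ≤ dotp u (coev x))
    (y : ℤ × ℤ) (hy : y = (((k - 1) / 2 : ℕ) : ℤ) • w) :
    (k - 1) / 2 ≤
      {z : ℤ × ℤ |
        coev z ∈ convexHull ℝ {coev x, coev y, -coev y} ∧
        dotp u (coev z) = ρ}.ncard :=
  stmt_2_general K u ρ hρ w hw k hk hk3 x hx y hy
end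

section
/- Let K ⊂ ℤ² be a two-dimensional convex symmetric neighbourhood, θ a threshold with U = U(K,θ), and u an isolated stable direction. If H is a helping set for u and some site outside l_u eventually becomes infected starting from H_u ∪ H, then H ∩ l_u = ∅. -/
open Set

/-- The translated punctured neighbourhood `x + (K \ {0})`. -/
def nbhd (K : Set (ℤ × ℤ)) (x : ℤ × ℤ) : Set (ℤ × ℤ) :=
  {y | ∃ k ∈ K, k ≠ (0, 0) ∧ y = x + k}

/-- The closure `[A]` of `A` under the threshold bootstrap percolation dynamics with
neighbourhood `K` and threshold `θ`. -/
def tclosure (K : Set (ℤ × ℤ)) (θ : ℕ) (A : Set (ℤ × ℤ)) : Set (ℤ × ℤ) :=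
  ⋂₀ {B | A ⊆ B ∧ ∀ x : ℤ × ℤ, θ ≤ (B ∩ nbhd K x).ncard → x ∈ B}

/-!
If `H` has a site on `l_u`, then `H_u ∪ l_u ∪ H` is already stable under the threshold rule, so
it contains the closure of `H_u ∪ H`. Indeed, a site strictly above `l_u` has at most
`|K ∩ H_u|` neighbours on or below `l_u` (the step to such a neighbour points into `H_u`), and its
neighbours in `H` above `l_u` miss the site on `l_u`, so there are fewer than `|H| = α(u)` of
them; in total fewer than `θ`.
-/

open Filter in
lemma tendsto_coev_cofinite_cocompact : Tendsto coev cofinite (cocompact (ℝ × ℝ)) := by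
  have h := Int.tendsto_coe_cofinite.prodMap_coprod Int.tendsto_coe_cofinite
  rwa [coprod_cofinite, coprod_cocompact] at h

lemma finite_coev_preimage_of_isBounded {S : Set (ℝ × ℝ)} (hS : Bornology.IsBounded S) :
    {x : ℤ × ℤ | coev x ∈ S}.Finite :=
  (tendsto_cofinite_cocompact_iff.mp tendsto_coev_cofinite_cocompact _
    hS.isCompact_closure).subset fun _ hx => subset_closure hx

lemma dotp_coev_add (u : ℝ × ℝ) (a b : ℤ × ℤ) :
    dotp u (coev (a + b)) = dotp u (coev a) + dotp u (coev b) := by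
  simp only [dotp, coev, Prod.fst_add, Prod.snd_add]
  push_cast
  ring

def IsTClosed (K : Set (ℤ × ℤ)) (θ : ℕ) (B : Set (ℤ × ℤ)) : Prop :=
  ∀ x : ℤ × ℤ, θ ≤ (B ∩ nbhd K x).ncard → x ∈ B

lemma tclosure_subset {K : Set (ℤ × ℤ)} {θ : ℕ} {A B : Set (ℤ × ℤ)} (hAB : A ⊆ B)
    (hB : IsTClosed K θ B) : tclosure K θ A ⊆ B :=
  sInter_subset_of_mem ⟨hAB, hB⟩

/-- The open half-plane `H_u`. -/
def negHalfPlane (u : ℝ × ℝ) : Set (ℤ × ℤ) := {x | dotp u (coev x) < 0}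

/-- The line `l_u`. -/
def zeroLine (u : ℝ × ℝ) : Set (ℤ × ℤ) := {x | dotp u (coev x) = 0}

section HalfPlaneLine

variable {K H : Set (ℤ × ℤ)} {u : ℝ × ℝ} {x : ℤ × ℤ}

lemma inter_nbhd_subset_of_dotp_pos (hx : 0 < dotp u (coev x)) :
    (negHalfPlane u ∪ zeroLine u ∪ H) ∩ nbhd K x ⊆
      (x + ·) '' (K ∩ negHalfPlane u) ∪ H \ zeroLine u := by
  rintro _ ⟨hyB, k, hkK, -, rfl⟩
  rcases le_or_gt (dotp u (coev (x + k))) 0 with hle | hpos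
  · left
    refine ⟨k, ⟨hkK, ?_⟩, rfl⟩
    change dotp u (coev k) < 0
    linarith [dotp_coev_add u x k]
  · right
    rcases hyB with (hy | hy) | hy
    · exact absurd hy (not_lt.mpr hpos.le)
    · exact absurd hy hpos.ne'
    · exact ⟨hy, hpos.ne'⟩

lemma isTClosed_negHalfPlane_union_zeroLine_union (hK : K.Finite) (hH : H.Finite)
    (hHl : (H ∩ zeroLine u).Nonempty) {θ : ℕ} (hθ : (K ∩ negHalfPlane u).ncard + H.ncard ≤ θ) :
    IsTClosed K θ (negHalfPlane u ∪ zeroLine u ∪ H) := by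
  intro x hx
  by_contra hxB
  have hxpos : 0 < dotp u (coev x) := by
    rcases lt_trichotomy (dotp u (coev x)) 0 with hneg | hzero | hpos
    · exact absurd (Or.inl (Or.inl hneg)) hxB
    · exact absurd (Or.inl (Or.inr hzero)) hxB
    · exact hpos
  obtain ⟨h, hhH, hhl⟩ := hHl
  have hHdiff : (H \ zeroLine u).ncard < H.ncard :=
    ncard_lt_ncard ⟨sdiff_subset, fun hsub => (hsub hhH).2 hhl⟩ hH
  have hfin : ((x + ·) '' (K ∩ negHalfPlane u) ∪ H \ zeroLine u).Finite :=
    ((hK.inter_of_left _).image _).union hH.sdiff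
  refine not_le.mpr ?_ hx
  calc ((negHalfPlane u ∪ zeroLine u ∪ H) ∩ nbhd K x).ncard
        ≤ ((x + ·) '' (K ∩ negHalfPlane u) ∪ H \ zeroLine u).ncard :=
          ncard_le_ncard (inter_nbhd_subset_of_dotp_pos hxpos) hfin
      _ ≤ ((x + ·) '' (K ∩ negHalfPlane u)).ncard + (H \ zeroLine u).ncard := ncard_union_le _ _
      _ < θ := by rw [ncard_image_of_injective _ (add_right_injective x)]; omega

end HalfPlaneLine

theorem stmt_4_general (S : Set (ℝ × ℝ)) (hSbdd : Bornology.IsBounded S)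
    (K : Set (ℤ × ℤ)) (hK : K = {x : ℤ × ℤ | coev x ∈ S})
    (θ : ℕ)
    (u : ℝ × ℝ)
    (Hu : Set (ℤ × ℤ)) (hHu : Hu = {x : ℤ × ℤ | dotp u (coev x) < 0})
    (α : ℤ) (hα : α = (θ : ℤ) - (K ∩ Hu).ncard)
    -- `H` is a helping set for `u`
    (H : Set (ℤ × ℤ)) (hHfin : H.Finite) (hHcard : (H.ncard : ℤ) = α)
    -- some site outside `l_u` eventually becomes infected
    (hout : ∃ x ∈ tclosure K θ (Hu ∪ H), x ∉ Hu ∪ H ∧ dotp u (coev x) ≠ 0) :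
    H ∩ {x : ℤ × ℤ | dotp u (coev x) = 0} = ∅ := by
  change H ∩ zeroLine u = ∅
  change Hu = negHalfPlane u at hHu
  subst hHu
  by_contra hHl
  have hclosed := isTClosed_negHalfPlane_union_zeroLine_union
    (hK ▸ finite_coev_preimage_of_isBounded hSbdd) hHfin (nonempty_iff_ne_empty.mpr hHl)
    (θ := θ) (by omega)
  obtain ⟨x, hx, hxA, hxl⟩ := hout
  rcases tclosure_subset (union_subset_union_left H subset_union_left) hclosed hx
    with (hxHu | hxl') | hxH
  · exact hxA (Or.inl hxHu)
  · exact hxl hxl'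
  · exact hxA (Or.inr hxH)

/-- with `K` a two-dimensional convex symmetric neighbourhood, threshold `θ`,
`u` an isolated stable direction with difficulty `α(u) = θ - |K ∩ H_u| > 0`, and `H` a
helping set for `u`: if some site outside `l_u` (and not initially infected) eventually
becomes infected starting from `H_u ∪ H`, then `H ∩ l_u = ∅`. -/
theorem stmt_4 (S : Set (ℝ × ℝ)) (hSbdd : Bornology.IsBounded S) (hSconv : Convex ℝ S)
    (hSsym : ∀ x ∈ S, -x ∈ S)
    (K : Set (ℤ × ℤ)) (hK : K = {x : ℤ × ℤ | coev x ∈ S})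
    (h0K : (0, 0) ∈ K)
    (h2d : ∀ u : ℝ × ℝ, ∃ x ∈ K, ∀ t : ℝ, coev x ≠ t • u)
    (θ : ℕ) (hθ : 0 < θ)
    (u : ℝ × ℝ) (hunit : u.1 ^ 2 + u.2 ^ 2 = 1)
    (Hu : Set (ℤ × ℤ)) (hHu : Hu = {x : ℤ × ℤ | dotp u (coev x) < 0})
    (hstable : tclosure K θ Hu = Hu)
    (α : ℤ) (hα : α = (θ : ℤ) - (K ∩ Hu).ncard) (hαpos : 0 < α)
    -- `H` is a helping set for `u`
    (H : Set (ℤ × ℤ)) (hHfin : H.Finite) (hHcard : (H.ncard : ℤ) = α)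
    (hHhelp : (tclosure K θ (Hu ∪ H) \ Hu).Infinite)
    -- some site outside `l_u` eventually becomes infected
    (hout : ∃ x ∈ tclosure K θ (Hu ∪ H), x ∉ Hu ∪ H ∧ dotp u (coev x) ≠ 0) :
    H ∩ {x : ℤ × ℤ | dotp u (coev x) = 0} = ∅ :=
  stmt_4_general S hSbdd K hK θ u Hu hHu α hα H hHfin hHcard hout
end

section
/- Let (v(n))_{n ∈ ℕ} be a non-increasing sequence in (0,1] and suppose there is a constant C ∈ ℕ such that v(n)·v(n') ≤ v(n+n') ≤ v(n−C)·v(n') for all n ≥ C and n' ≥ 0. Then there exists μ ∈ (0,1] with lim_{n→∞} v(n)^{1/n} = μ and μ^{n+C} ≤ v(n) ≤ μ^n for all n ∈ ℕ. -/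
open Filter Topology

/-!
Write `f n = -log (v n)`. The two hypotheses say that `f` is subadditive once the first argument
is at least `C`, and superadditive up to a gap `C`: `f a + f b ≤ f (a + b + C)`. Fekete's lemma
gives `f n / n → L`. Comparing `f` along the multiples `k * m` with the subadditive bound
`f (C + k m) ≤ f C + k f m` yields `m L ≤ f m`, and comparing along `k (n + C)` with the
superadditive bound `k f n ≤ f (k (n + C)) - f 0` yields `f n ≤ (n + C) L`. Then `μ = exp (-L)`.
-/

lemma le_div_of_tendsto_of_le_add_mul {u : ℕ → ℝ} {L A a : ℝ} {d : ℕ}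
    (hu : Tendsto (fun n : ℕ => u n / n) atTop (𝓝 L)) (hd : 0 < d)
    (h : ∀ k : ℕ, u (k * d) ≤ A + k * a) : L ≤ a / d := by
  have hd' : (0 : ℝ) < d := by exact_mod_cast hd
  have hsubseq : Tendsto (fun k : ℕ => u (k * d) / (k * d : ℕ)) atTop (𝓝 L) :=
    hu.comp (tendsto_atTop_mono (fun k => Nat.le_mul_of_pos_right k hd) tendsto_id)
  have hbound : Tendsto (fun k : ℕ => A / d / k + a / d) atTop (𝓝 (a / d)) := by
    simpa using (tendsto_const_div_atTop_nhds_zero_nat (A / d)).add_const (a / d)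
  refine le_of_tendsto_of_tendsto hsubseq hbound ?_
  filter_upwards [eventually_gt_atTop 0] with k hk
  have hk' : (0 : ℝ) < k := by exact_mod_cast hk
  rw [Nat.cast_mul, div_le_iff₀ (by positivity)]
  calc u (k * d) ≤ A + k * a := h k
    _ = (A / d / k + a / d) * (k * d) := by field_simp

lemma div_le_of_tendsto_of_add_mul_le {u : ℕ → ℝ} {L A a : ℝ} {d : ℕ}
    (hu : Tendsto (fun n : ℕ => u n / n) atTop (𝓝 L)) (hd : 0 < d)
    (h : ∀ k : ℕ, A + k * a ≤ u (k * d)) : a / d ≤ L := by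
  have := le_div_of_tendsto_of_le_add_mul (u := -u) (L := -L) (A := -A) (a := -a)
    (by simpa only [Pi.neg_apply, neg_div] using hu.neg) hd (fun k => by simp only [Pi.neg_apply]; linarith [h k])
  rwa [neg_div, neg_le_neg_iff] at this

section

variable {f : ℕ → ℝ} {C : ℕ}

lemma exists_tendsto_div_of_subadditive_from (hmono : Monotone f) (hnonneg : ∀ n, 0 ≤ f n)
    (hsub : ∀ m n, C ≤ m → f (m + n) ≤ f m + f n) :
    ∃ L, Tendsto (fun n : ℕ => f n / n) atTop (𝓝 L) := by
  -- adding `f C` makes `f` subadditive also below `C`, by monotonicity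
  have hF : Subadditive (fun n => f n + f C) := by
    intro m n
    rcases le_or_gt C m with hm | hm
    · linarith [hsub m n hm, hnonneg C]
    · linarith [hmono (show m + n ≤ C + n by omega), hsub C n le_rfl, hnonneg m]
  have hbdd : BddBelow (Set.range fun n : ℕ => (f n + f C) / n) :=
    ⟨0, by rintro _ ⟨n, rfl⟩; have := hnonneg n; have := hnonneg C; positivity⟩
  refine ⟨hF.lim, ?_⟩
  simpa [add_div] using (hF.tendsto_lim hbdd).sub (tendsto_const_div_atTop_nhds_zero_nat (f C))

lemma mul_le_of_tendsto_of_subadditive_from {L : ℝ} (hmono : Monotone f)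
    (hsub : ∀ m n, C ≤ m → f (m + n) ≤ f m + f n)
    (hlim : Tendsto (fun n : ℕ => f n / n) atTop (𝓝 L)) (m : ℕ) : m * L ≤ f m := by
  rcases m.eq_zero_or_pos with rfl | hm
  · simpa using hsub C 0 le_rfl
  have hmul : ∀ k : ℕ, f (C + k * m) ≤ f C + k * f m := by
    intro k
    induction k with
    | zero => simp
    | succ k ih =>
      have := hsub (C + k * m) m (Nat.le_add_right C _)
      rw [show C + (k + 1) * m = C + k * m + m by ring]
      push_cast
      linarith
  have := le_div_of_tendsto_of_le_add_mul hlim hm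
    fun k => (hmono (Nat.le_add_left _ C)).trans (hmul k)
  rwa [le_div_iff₀ (by positivity), mul_comm] at this

lemma le_mul_of_tendsto_of_superadditive_gap {L : ℝ}
    (hgap : ∀ a b, f a + f b ≤ f (a + b + C))
    (hlim : Tendsto (fun n : ℕ => f n / n) atTop (𝓝 L)) (n : ℕ) : f n ≤ (n + C) * L := by
  rcases (n + C).eq_zero_or_pos with h0 | hpos
  · obtain ⟨rfl, rfl⟩ : n = 0 ∧ C = 0 := by omega
    simpa using hgap 0 0
  have hmul : ∀ k : ℕ, f 0 + k * f n ≤ f (k * (n + C)) := by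
    intro k
    induction k with
    | zero => simp
    | succ k ih =>
      have := hgap (k * (n + C)) n
      rw [show (k + 1) * (n + C) = k * (n + C) + n + C by ring]
      push_cast
      linarith
  have := div_le_of_tendsto_of_add_mul_le hlim hpos hmul
  rwa [div_le_iff₀ (by positivity), mul_comm, Nat.cast_add] at this

end

theorem stmt_5_general (v : ℕ → ℝ) (hv_mono : Antitone v)
    (hv_pos : ∀ n, 0 < v n)
    (C : ℕ)
    (hsuper : ∀ n n' : ℕ, C ≤ n → v n * v n' ≤ v (n + n'))
    (hsub : ∀ n n' : ℕ, C ≤ n → v (n + n') ≤ v (n - C) * v n') :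
    ∃ μ : ℝ, 0 < μ ∧ μ ≤ 1 ∧
      Filter.Tendsto (fun n : ℕ => (v n) ^ ((n : ℝ)⁻¹)) Filter.atTop (nhds μ) ∧
      ∀ n : ℕ, μ ^ (n + C) ≤ v n ∧ v n ≤ μ ^ n := by
  set f : ℕ → ℝ := fun n => -Real.log (v n) with hf
  have hf_mono : Monotone f := fun a b hab =>
    neg_le_neg (Real.log_le_log (hv_pos b) (hv_mono hab))
  have hf_sub : ∀ m n, C ≤ m → f (m + n) ≤ f m + f n := fun m n hm => by
    have := Real.log_le_log (mul_pos (hv_pos m) (hv_pos n)) (hsuper m n hm)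
    rw [Real.log_mul (hv_pos m).ne' (hv_pos n).ne'] at this
    simp only [hf]
    linarith
  have hf_gap : ∀ a b, f a + f b ≤ f (a + b + C) := fun a b => by
    have := Real.log_le_log (hv_pos _) (hsub (a + C) b (Nat.le_add_left C a))
    rw [Nat.add_sub_cancel, Real.log_mul (hv_pos a).ne' (hv_pos b).ne', Nat.add_right_comm] at this
    simp only [hf]
    linarith
  have hf_nonneg : ∀ n, 0 ≤ f n := fun n =>
    (by simpa using hf_sub C 0 le_rfl : 0 ≤ f 0).trans (hf_mono n.zero_le)
  obtain ⟨L, hL⟩ := exists_tendsto_div_of_subadditive_from hf_mono hf_nonneg hf_sub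
  have hL_nonneg : 0 ≤ L := ge_of_tendsto' hL fun n => div_nonneg (hf_nonneg n) n.cast_nonneg
  refine ⟨Real.exp (-L), Real.exp_pos _, Real.exp_le_one_iff.mpr (by linarith), ?_,
    fun n => ⟨?_, ?_⟩⟩
  · have hroot : ∀ n : ℕ, v n ^ (n : ℝ)⁻¹ = Real.exp (-(f n / n)) := fun n => by
      rw [Real.rpow_def_of_pos (hv_pos n), hf]
      ring_nf
    simp only [hroot]
    exact (Real.continuous_exp.tendsto _).comp hL.neg
  · rw [← Real.exp_nat_mul, ← Real.exp_log (hv_pos n), Real.exp_le_exp]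
    have := le_mul_of_tendsto_of_superadditive_gap hf_gap hL n
    push_cast
    linarith
  · rw [← Real.exp_nat_mul, ← Real.exp_log (hv_pos n), Real.exp_le_exp]
    have := mul_le_of_tendsto_of_subadditive_from hf_mono hf_sub hL n
    linarith

/-- two-sided sub/super-multiplicativity lemma.
If `v : ℕ → ℝ` is non-increasing with values in `(0,1]` and there is `C ∈ ℕ` with
`v n * v n' ≤ v (n + n') ≤ v (n - C) * v n'` for all `n ≥ C` and `n' ≥ 0`, then there is
`μ ∈ (0,1]` with `v n ^ (1/n) → μ` and `μ ^ (n + C) ≤ v n ≤ μ ^ n` for all `n`. -/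
theorem stmt_5 (v : ℕ → ℝ) (hv_mono : Antitone v)
    (hv_pos : ∀ n, 0 < v n) (hv_le : ∀ n, v n ≤ 1)
    (C : ℕ)
    (hsuper : ∀ n n' : ℕ, C ≤ n → v n * v n' ≤ v (n + n'))
    (hsub : ∀ n n' : ℕ, C ≤ n → v (n + n') ≤ v (n - C) * v n') :
    ∃ μ : ℝ, 0 < μ ∧ μ ≤ 1 ∧
      Filter.Tendsto (fun n : ℕ => (v n) ^ ((n : ℝ)⁻¹)) Filter.atTop (nhds μ) ∧
      ∀ n : ℕ, μ ^ (n + C) ≤ v n ∧ v n ≤ μ ^ n :=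
  stmt_5_general v hv_mono hv_pos C hsuper hsub
end

section
/- The sharp threshold constant λ is finite: taking the sequence D_n = D[2^n] of symmetric droplets with all dimensions equal to 2^n gives Σ_{n∈ℤ} W(D[2^n], D[2^{n+1}]) < ∞. -/
/-!
Write `g y = -log (1 - e^{-y})`. Each summand is at most `2^n g (c 2^n) ∑ a_u`. For `n ≥ 0`,
Cauchy condensation (`g` is antitone) reduces `∑ 2^n g (c 2^n)` to `∑_k g (c k)`, which converges
because `∑_k e^{-c k}` does. For `n < 0`, the bound `g y ≤ y - log y` makes the terms
`O(|n| 2^n)`.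
-/

open Real

section NegLogOneSubExpNeg

variable {c y : ℝ}

lemma neg_log_one_sub_exp_neg_nonneg (hy : 0 ≤ y) : 0 ≤ -log (1 - exp (-y)) := by
  have hexp : exp (-y) ≤ 1 := exp_le_one_iff.mpr (by linarith)
  exact neg_nonneg.mpr (log_nonpos (by linarith) (by linarith [exp_pos (-y)]))

lemma neg_log_one_sub_exp_neg_antitoneOn :
    AntitoneOn (fun y : ℝ => -log (1 - exp (-y))) (Set.Ioi 0) := by
  intro y (hy : 0 < y) z _ hyz
  have hexp : exp (-y) < 1 := exp_lt_one_iff.mpr (by linarith)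
  have hmono : exp (-z) ≤ exp (-y) := exp_le_exp.mpr (by linarith)
  exact neg_le_neg (log_le_log (by linarith) (by linarith))

-- `1 - e^{-y} ≥ y e^{-y}` is `e^y ≥ 1 + y`.
lemma neg_log_one_sub_exp_neg_le (hy : 0 < y) : -log (1 - exp (-y)) ≤ y - log y := by
  have hkey : y * exp (-y) ≤ 1 - exp (-y) := by
    have hexp_ge := add_one_le_exp y
    have hmul : exp (-y) * exp y = 1 := by rw [← exp_add, neg_add_cancel, exp_zero]
    nlinarith [exp_pos (-y)]
  have hlog := log_le_log (by positivity) hkey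
  rw [log_mul hy.ne' (exp_pos _).ne', log_exp] at hlog
  linarith

lemma summable_neg_log_one_sub_exp_neg_mul_nat (hc : 0 < c) :
    Summable fun k : ℕ => -log (1 - exp (-(c * k))) := by
  have hexp : Summable fun k : ℕ => -exp (-(c * k)) := by
    refine (summable_exp_nat_mul_iff.mpr (neg_lt_zero.mpr hc)).neg.congr fun k => ?_
    ring_nf
  simpa only [sub_eq_add_neg] using (summable_log_one_add_of_summable hexp).neg

lemma summable_two_pow_mul_neg_log_one_sub_exp_neg (hc : 0 < c) :
    Summable fun n : ℕ => (2 : ℝ) ^ n * -log (1 - exp (-(c * 2 ^ n))) := by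
  have hcond := (summable_condensed_iff_of_nonneg
    (f := fun k : ℕ => -log (1 - exp (-(c * k))))
    (fun k => neg_log_one_sub_exp_neg_nonneg (by positivity))
    (fun m n hm hmn => neg_log_one_sub_exp_neg_antitoneOn
      (mul_pos hc (Nat.cast_pos.mpr hm)) (mul_pos hc (Nat.cast_pos.mpr (hm.trans_le hmn)))
      (by gcongr))).mpr (summable_neg_log_one_sub_exp_neg_mul_nat hc)
  simpa only [Nat.cast_pow, Nat.cast_ofNat] using hcond

lemma summable_inv_two_pow_mul_neg_log_one_sub_exp_neg (hc : 0 < c) :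
    Summable fun n : ℕ => ((2 : ℝ) ^ n)⁻¹ * -log (1 - exp (-(c * ((2 : ℝ) ^ n)⁻¹))) := by
  have hgeom : Summable fun n : ℕ => (2⁻¹ : ℝ) ^ n :=
    summable_geometric_of_lt_one (by norm_num) (by norm_num)
  have hgeom' : Summable fun n : ℕ => (n : ℝ) * (2⁻¹ : ℝ) ^ n := by
    simpa only [pow_one] using
      summable_pow_mul_geometric_of_norm_lt_one 1 (r := (2⁻¹ : ℝ)) (by norm_num)
  refine Summable.of_nonneg_of_le (fun n => mul_nonneg (by positivity)
      (neg_log_one_sub_exp_neg_nonneg (by positivity)))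
    (fun n => ?_) ((hgeom.mul_left (c - log c)).add (hgeom'.mul_left (log 2)))
  set x : ℝ := ((2 : ℝ) ^ n)⁻¹ with hx
  have hx0 : 0 < x := by positivity
  have hx1 : x ≤ 1 := inv_le_one_of_one_le₀ (one_le_pow₀ (by norm_num))
  have hlog : log (c * x) = log c - n * log 2 := by
    rw [log_mul hc.ne' hx0.ne', hx, log_inv, log_pow]
    ring
  calc x * -log (1 - exp (-(c * x)))
      ≤ x * (c * x - log (c * x)) :=
        mul_le_mul_of_nonneg_left (neg_log_one_sub_exp_neg_le (by positivity)) hx0.le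
    _ = c * x * x - log c * x + log 2 * (n * x) := by rw [hlog]; ring
    _ ≤ (c - log c) * (2⁻¹ : ℝ) ^ n + log 2 * (n * (2⁻¹ : ℝ) ^ n) := by
        rw [inv_pow, ← hx]
        nlinarith [mul_le_mul_of_nonneg_left hx1 (mul_pos hc hx0).le]

lemma summable_zpow_two_mul_neg_log_one_sub_exp_neg (hc : 0 < c) :
    Summable fun n : ℤ => (2 : ℝ) ^ n * -log (1 - exp (-(c * 2 ^ n))) := by
  rw [summable_int_iff_summable_nat_and_neg]
  refine ⟨?_, ?_⟩
  · simpa only [zpow_natCast] using summable_two_pow_mul_neg_log_one_sub_exp_neg hc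
  · simpa only [zpow_neg, zpow_natCast] using summable_inv_two_pow_mul_neg_log_one_sub_exp_neg hc

end NegLogOneSubExpNeg

theorem stmt_11_general (Sα : Type*) [Fintype Sα] (c : ℝ) (hc : 0 < c)
    (h : Sα → ℝ → ℝ)
    (hupper : ∀ u : Sα, ∀ x > (0 : ℝ), h u x ≤ -Real.log (1 - Real.exp (-(c * x))))
    (a : Sα → ℝ) (ha : ∀ u, 0 ≤ a u) :
    (∑' n : ℤ, ENNReal.ofReal (∑ u : Sα, h u ((2 : ℝ) ^ n) * ((2 : ℝ) ^ n * a u))) < ⊤ := by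
  have hbound : ∀ n : ℤ, ∑ u : Sα, h u ((2 : ℝ) ^ n) * ((2 : ℝ) ^ n * a u)
      ≤ (2 : ℝ) ^ n * -log (1 - exp (-(c * 2 ^ n))) * ∑ u : Sα, a u := by
    intro n
    have hx : (0 : ℝ) < 2 ^ n := by positivity
    calc ∑ u : Sα, h u ((2 : ℝ) ^ n) * ((2 : ℝ) ^ n * a u)
        ≤ ∑ u : Sα, -log (1 - exp (-(c * 2 ^ n))) * ((2 : ℝ) ^ n * a u) :=
          Finset.sum_le_sum fun u _ =>
            mul_le_mul_of_nonneg_right (hupper u _ hx) (mul_nonneg hx.le (ha u))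
      _ = (2 : ℝ) ^ n * -log (1 - exp (-(c * 2 ^ n))) * ∑ u : Sα, a u := by
          rw [← Finset.mul_sum, ← Finset.mul_sum]; ring
  calc (∑' n : ℤ, ENNReal.ofReal (∑ u : Sα, h u ((2 : ℝ) ^ n) * ((2 : ℝ) ^ n * a u)))
      ≤ ∑' n : ℤ, ENNReal.ofReal
          ((2 : ℝ) ^ n * -log (1 - exp (-(c * 2 ^ n))) * ∑ u : Sα, a u) :=
        ENNReal.tsum_le_tsum fun n => ENNReal.ofReal_le_ofReal (hbound n)
    _ < ⊤ := ((summable_zpow_two_mul_neg_log_one_sub_exp_neg hc).mul_right _).tsum_ofReal_lt_top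

/-- the sharp threshold constant `λ` is finite: taking the sequence
`D_n = D[2^n]` of symmetric droplets with all dimensions equal to `2^n` (so that the
location of `D[2^n] ⊆ D[2^{n+1}]` has entries `2^n a_u` for a fixed vector `a ≥ 0` of
radii of `D[1]`) gives `Σ_{n ∈ ℤ} W(D[2^n], D[2^{n+1}]) < ∞`, where
`W(D,D') = Σ_{u ∈ S_α} h^u(m_u) s_u` and each `h^u` satisfies
`h^u(x) ≤ -log(1 - e^{-c x})`. -/
theorem stmt_11 (Sα : Type*) [Fintype Sα] (c : ℝ) (hc : 0 < c)
    (h : Sα → ℝ → ℝ)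
    (hpos : ∀ u : Sα, ∀ x > (0 : ℝ), 0 < h u x)
    (hupper : ∀ u : Sα, ∀ x > (0 : ℝ), h u x ≤ -Real.log (1 - Real.exp (-(c * x))))
    (a : Sα → ℝ) (ha : ∀ u, 0 ≤ a u) :
    (∑' n : ℤ, ENNReal.ofReal (∑ u : Sα, h u ((2 : ℝ) ^ n) * ((2 : ℝ) ^ n * a u))) < ⊤ :=
  stmt_11_general Sα c hc h hupper a ha
end

section
/- Let (a^{(0)}, a^{(∞)}) ∈ ℝ^{S_α} × ℝ^{S_α} with a^{(0)} ≤ a^{(∞)} componentwise and fix T > 0. Define a finite sequence a^{(0)} = b_0 ≤ b_1 ≤ … ≤ b_N = a^{(∞)} by repeatedly increasing a single coordinate by min(T, remaining gap). If along this sequence, whenever coordinate u is increased at step i the droplet dimension m_u(b_i) is at least the dimension m_u(a^{(0)}), then Σ_{i=0}^{N−1} W(D[b_i], D[b_{i+1}]) ≤ W(D[a^{(0)}], D[a^{(∞)}]), where W(D,D′) = Σ_{u∈S_α} h^u(m_u(D))·(a'_u − a_u) with h^u non-increasing. -/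
/-! Each step increases the single coordinate `u i` by a nonnegative amount (the path stays
below `aI`), and on that coordinate the step weight `h (m b_i)` is at most `h (m a0)` because
`h` is non-increasing. Comparing weights step by step and telescoping the increments gives the
bound. -/

theorem Fin.sum_succ_sub_castSucc {M : Type*} [AddCommGroup M] :
    ∀ {n : ℕ} (f : Fin (n + 1) → M),
      ∑ i : Fin n, (f i.succ - f i.castSucc) = f (Fin.last n) - f 0
  | 0, f => by simp
  | n + 1, f => by
    rw [Fin.sum_univ_succ]
    simp only [← Fin.succ_castSucc]
    rw [Fin.sum_succ_sub_castSucc (fun i => f i.succ)]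
    simp

theorem sum_weighted_increments_le {ι : Type*} [Fintype ι] {N : ℕ}
    (b : Fin (N + 1) → ι → ℝ) (w : Fin N → ι → ℝ) (w₀ : ι → ℝ)
    (hw : ∀ i v, w i v * (b i.succ v - b i.castSucc v) ≤ w₀ v * (b i.succ v - b i.castSucc v)) :
    ∑ i, ∑ v, w i v * (b i.succ v - b i.castSucc v) ≤
      ∑ v, w₀ v * (b (Fin.last N) v - b 0 v) := by
  calc ∑ i, ∑ v, w i v * (b i.succ v - b i.castSucc v)
      ≤ ∑ i, ∑ v, w₀ v * (b i.succ v - b i.castSucc v) :=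
        Finset.sum_le_sum fun i _ => Finset.sum_le_sum fun v _ => hw i v
    _ = ∑ v, w₀ v * (b (Fin.last N) v - b 0 v) := by
        rw [Finset.sum_comm]
        refine Finset.sum_congr rfl fun v _ => ?_
        rw [← Finset.mul_sum, ← Fin.sum_succ_sub_castSucc (fun i => b i v)]

theorem update_add_min_sub_le {ι : Type*} [DecidableEq ι] {x c : ι → ℝ} (hx : x ≤ c)
    (u : ι) (T : ℝ) : Function.update x u (x u + min T (c u - x u)) ≤ c := by
  intro v
  rcases eq_or_ne v u with rfl | hv
  · simp only [Function.update_self]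
    linarith [min_le_right T (c v - x v)]
  · simpa only [Function.update_of_ne hv] using hx v

theorem stmt_19_general (ι : Type*) [Fintype ι] [DecidableEq ι]
    (h : ι → ℝ → ℝ)
    (hanti : ∀ u : ι, ∀ x y : ℝ, 0 < x → x ≤ y → h u y ≤ h u x)
    (m : (ι → ℝ) → ι → ℝ)
    (T : ℝ) (hT : 0 < T)
    (a0 aI : ι → ℝ) (hle : a0 ≤ aI)
    (hm0 : ∀ u : ι, 0 < m a0 u)
    (N : ℕ) (b : Fin (N + 1) → ι → ℝ)
    (hb0 : b 0 = a0) (hbN : b (Fin.last N) = aI)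
    (u : Fin N → ι)
    (hstep : ∀ i : Fin N,
      b i.succ = Function.update (b i.castSucc) (u i)
        (b i.castSucc (u i) + min T (aI (u i) - b i.castSucc (u i))))
    (hdim : ∀ i : Fin N, m a0 (u i) ≤ m (b i.castSucc) (u i)) :
    (∑ i : Fin N, ∑ v : ι, h v (m (b i.castSucc) v) * (b i.succ v - b i.castSucc v)) ≤
      ∑ v : ι, h v (m a0 v) * (aI v - a0 v) := by
  have hbI : ∀ i, b i ≤ aI := by
    intro i
    induction i using Fin.induction with
    | zero => rwa [hb0]
    | succ i ih => rw [hstep i]; exact update_add_min_sub_le ih _ _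
  calc _ ≤ ∑ v, h v (m a0 v) * (b (Fin.last N) v - b 0 v) :=
        sum_weighted_increments_le b _ _ fun i v => ?_
    _ = _ := by rw [hb0, hbN]
  rcases eq_or_ne v (u i) with rfl | hv
  · have hδ : 0 ≤ b i.succ (u i) - b i.castSucc (u i) := by
      rw [hstep i, Function.update_self, add_sub_cancel_left]
      exact le_min hT.le (sub_nonneg.2 (hbI i.castSucc (u i)))
    exact mul_le_mul_of_nonneg_right (hanti _ _ _ (hm0 _) (hdim i)) hδ
  · simp only [hstep i, Function.update_of_ne hv, sub_self, mul_zero, le_refl]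

/-- the refinement step in the truncation lemma. Given radii
`a⁰ ≤ a^∞` and `T > 0`, define a finite sequence `a⁰ = b₀ ≤ b₁ ≤ … ≤ b_N = a^∞` by
repeatedly increasing a single coordinate `u_i` by `min(T, remaining gap)`. If along
this sequence, whenever coordinate `u_i` is increased at step `i`, the droplet dimension
`m_{u_i}(b_i)` is at least `m_{u_i}(a⁰)`, then
`Σ_i W(D[b_i], D[b_{i+1}]) ≤ W(D[a⁰], D[a^∞])`, where
`W(D[a], D[a']) = Σ_u h^u(m_u(a)) (a'_u - a_u)` with each `h^u : (0,∞) → (0,∞)`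
non-increasing and `m` the droplet dimension function. -/
theorem stmt_19 (ι : Type*) [Fintype ι] [DecidableEq ι]
    (h : ι → ℝ → ℝ)
    (hanti : ∀ u : ι, ∀ x y : ℝ, 0 < x → x ≤ y → h u y ≤ h u x)
    (hpos : ∀ u : ι, ∀ x : ℝ, 0 < x → 0 < h u x)
    (m : (ι → ℝ) → ι → ℝ)
    (T : ℝ) (hT : 0 < T)
    (a0 aI : ι → ℝ) (hle : a0 ≤ aI)
    (hm0 : ∀ u : ι, 0 < m a0 u)
    (N : ℕ) (b : Fin (N + 1) → ι → ℝ)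
    (hb0 : b 0 = a0) (hbN : b (Fin.last N) = aI)
    (u : Fin N → ι)
    (hstep : ∀ i : Fin N,
      b i.succ = Function.update (b i.castSucc) (u i)
        (b i.castSucc (u i) + min T (aI (u i) - b i.castSucc (u i))))
    (hdim : ∀ i : Fin N, m a0 (u i) ≤ m (b i.castSucc) (u i)) :
    (∑ i : Fin N, ∑ v : ι, h v (m (b i.castSucc) v) * (b i.succ v - b i.castSucc v)) ≤
      ∑ v : ι, h v (m a0 v) * (aI v - a0 v) :=
  stmt_19_general ι h hanti m T hT a0 aI hle hm0 N b hb0 hbN u hstep hdim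
end
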